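/- Let (X, ≤) be a locally compact, order-connected topological poset. If ⟨x_λ⟩ is a net in X and x ∈ X such that the net of principal ideals ⟨x_λ↓⟩ converges to x↓ in C(X) with the Fell topology, then ⟨x_λ⟩ converges to x in X. In other words, the map x↓ ↦ x from the set of principal ideals (with the relative Fell topology) onto X is continuous. -/

import Mathlib

open Set Filter Topology TopologicalSpace

/-- The Fell topology on the hyperspace of closed subsets of `X`: it is generated by the
sets `{A : A ∩ O ≠ ∅}` for `O` open and the sets `{A : A ∩ K = ∅}` for `K` compact. -/
instance fellTopology (X : Type*) [TopologicalSpace X] : TopologicalSpace (Closeds X) :=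
  TopologicalSpace.generateFrom
    ({S | ∃ O : Set X, IsOpen O ∧ S = {A : Closeds X | ((A : Set X) ∩ O).Nonempty}} ∪
     {S | ∃ K : Set X, IsCompact K ∧ S = {A : Closeds X | (A : Set X) ∩ K = ∅}})

/-- In a topological poset, every principal ideal is closed. -/
lemma isClosed_Iic_of_isClosed_le {X : Type*} [Preorder X] [TopologicalSpace X]
    (h : IsClosed {p : X × X | p.1 ≤ p.2}) (x : X) : IsClosed (Set.Iic x) :=
  h.preimage (f := fun z : X => (z, x)) (continuous_id.prodMk continuous_const)

/-- Let `(X, ≤)` be a locally compact, order-connected topological poset.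
If a net `⟨x_λ⟩` (indexed by a directed set `Λ`) is such that the principal ideals
`(x_λ)↓` converge to `x↓` in the Fell topology, then `x_λ → x` in `X`; i.e. the map
`x↓ ↦ x` from the principal ideals (with the relative Fell topology) onto `X` is continuous. -/
theorem tendsto_of_tendsto_principalIdeal_fell
    {X : Type*} [PartialOrder X] [TopologicalSpace X] [LocallyCompactSpace X]
    (hclosed : IsClosed {p : X × X | p.1 ≤ p.2})
    (hconn : ∀ x y : X, x ≤ y → IsConnected (Set.Icc x y))
    {Λ : Type*} [Preorder Λ] [IsDirected Λ (· ≤ ·)] [Nonempty Λ]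
    (xl : Λ → X) (x : X)
    (h : Filter.Tendsto
      (fun l : Λ => (⟨Set.Iic (xl l), isClosed_Iic_of_isClosed_le hclosed (xl l)⟩ : Closeds X))
      Filter.atTop (𝓝 (⟨Set.Iic x, isClosed_Iic_of_isClosed_le hclosed x⟩ : Closeds X))) :
    Filter.Tendsto xl Filter.atTop (𝓝 x) := by
  classical
  -- X is Hausdorff
  haveI : T2Space X := by
    rw [t2_iff_isClosed_diagonal]
    have : diagonal X = {p : X × X | p.1 ≤ p.2} ∩ {p : X × X | p.2 ≤ p.1} := by
      ext ⟨a, b⟩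
      simp only [mem_diagonal_iff, mem_inter_iff, mem_setOf_eq]
      exact ⟨fun h => by simp [h], fun ⟨h1, h2⟩ => le_antisymm h1 h2⟩
    rw [this]
    exact hclosed.inter (hclosed.preimage continuous_swap)
  -- hit condition
  have hit : ∀ O : Set X, IsOpen O → x ∈ O →
      ∀ᶠ l in atTop, (Set.Iic (xl l) ∩ O).Nonempty := by
    intro O hO hxO
    have hSopen : IsOpen {A : Closeds X | ((A : Set X) ∩ O).Nonempty} :=
      TopologicalSpace.GenerateOpen.basic _ (Or.inl ⟨O, hO, rfl⟩)
    have := h (hSopen.mem_nhds (by exact ⟨x, le_refl x, hxO⟩))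
    exact this
  -- miss condition
  have miss : ∀ K : Set X, IsCompact K → Set.Iic x ∩ K = ∅ →
      ∀ᶠ l in atTop, Set.Iic (xl l) ∩ K = ∅ := by
    intro K hK hdisj
    have hSopen : IsOpen {A : Closeds X | ((A : Set X) ∩ K = ∅)} :=
      TopologicalSpace.GenerateOpen.basic _ (Or.inr ⟨K, hK, rfl⟩)
    exact h (hSopen.mem_nhds hdisj)
  rw [tendsto_nhds]
  intro U hU hxU
  obtain ⟨C, hCcpt, hxC, hCU⟩ := exists_compact_subset hU hxU
  have hCclosed : IsClosed C := hCcpt.isClosed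
  have hfr : IsCompact (frontier C) :=
    hCcpt.of_isClosed_subset isClosed_frontier (hCclosed.frontier_subset)
  -- key: neighborhoods around frontier points
  have key : ∀ y ∈ frontier C, ∃ V W : Set X, IsOpen V ∧ y ∈ V ∧ IsOpen W ∧ x ∈ W ∧
      ∀ᶠ l in atTop, ∀ z v : X, z ∈ W → z ≤ v → v ≤ xl l → v ∉ V := by
    intro y hy
    by_cases hyx : y ≤ x
    · -- then ¬ x ≤ y since y ≠ x
      have hyne : y ≠ x := by
        intro hh; rw [hh] at hy; exact hy.2 hxC
      have hnxy : ¬ x ≤ y := fun hh => hyne (le_antisymm hyx hh)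
      have hopen : IsOpen {p : X × X | p.1 ≤ p.2}ᶜ := hclosed.isOpen_compl
      obtain ⟨W, V, hW, hV, hxW, hyV, hsub⟩ := isOpen_prod_iff.mp hopen x y hnxy
      refine ⟨V, W, hV, hyV, hW, hxW, Eventually.of_forall fun l z v hzW hzv _ hvV => ?_⟩
      exact hsub (mk_mem_prod hzW hvV) hzv
    · -- y ∉ Iic x
      obtain ⟨K, hKcpt, hyK, hKsub⟩ :=
        exists_compact_subset (isClosed_Iic_of_isClosed_le hclosed x).isOpen_compl hyx
      have hdisj : Set.Iic x ∩ K = ∅ := by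
        rw [eq_empty_iff_forall_notMem]
        rintro v ⟨hv1, hv2⟩
        exact hKsub hv2 hv1
      refine ⟨interior K, univ, isOpen_interior, hyK, isOpen_univ, mem_univ x, ?_⟩
      filter_upwards [miss K hKcpt hdisj] with l hl z v _ _ hvx hvV
      have hmem : v ∈ Set.Iic (xl l) ∩ K := ⟨hvx, interior_subset hvV⟩
      rw [hl] at hmem
      exact hmem
  choose! V W hVopen hyV hWopen hxW hev using key
  obtain ⟨t, htsub, htfin, htcov⟩ :=
    hfr.elim_finite_subcover_image (fun y hy => hVopen y hy) (fun y hy => by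
      exact mem_biUnion hy (hyV y hy))
  -- the open neighborhood of x
  set W₀ : Set X := interior C ∩ ⋂ y ∈ t, W y with hW₀
  have hW₀open : IsOpen W₀ :=
    isOpen_interior.inter (htfin.isOpen_biInter fun y hy => hWopen y (htsub hy))
  have hxW₀ : x ∈ W₀ :=
    ⟨hxC, mem_biInter fun y hy => hxW y (htsub hy)⟩
  have hevAll : ∀ᶠ l in atTop, ∀ y ∈ t, ∀ z v : X, z ∈ W y → z ≤ v → v ≤ xl l → v ∉ V y :=
    (htfin.eventually_all).mpr fun y hy => hev y (htsub hy)
  filter_upwards [hit W₀ hW₀open hxW₀, hevAll] with l ⟨z, hzIic, hzW₀⟩ hall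
  by_contra hlU
  have hlC : xl l ∉ C := fun hh => hlU (hCU hh)
  -- the interval [z, xl l] is connected, meeting interior C and Cᶜ
  have hconn' := (hconn z (xl l) hzIic).isPreconnected
  have hfrmeet : (Set.Icc z (xl l) ∩ frontier C).Nonempty := by
    by_contra hemp
    rw [not_nonempty_iff_eq_empty] at hemp
    have hsub : Set.Icc z (xl l) ⊆ interior C ∪ Cᶜ := by
      intro p hp
      by_cases hpC : p ∈ C
      · left
        by_contra hpint
        refine (eq_empty_iff_forall_notMem.mp hemp p) ⟨hp, ?_⟩
        rw [hCclosed.frontier_eq]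
        exact ⟨hpC, hpint⟩
      · right; exact hpC
    obtain ⟨p, -, hpint, hpcomp⟩ :=
      hconn' (interior C) Cᶜ isOpen_interior hCclosed.isOpen_compl hsub
        ⟨z, ⟨le_refl z, hzIic⟩, hzW₀.1⟩ ⟨xl l, ⟨hzIic, le_refl _⟩, hlC⟩
    exact hpcomp (interior_subset hpint)
  obtain ⟨v, hvIcc, hvfr⟩ := hfrmeet
  obtain ⟨y, hy, hvV⟩ := mem_iUnion₂.mp (htcov hvfr)
  exact hall y hy z v (mem_iInter₂.mp hzW₀.2 y hy) hvIcc.1 hvIcc.2 hvV
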